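/- Fix \kappa > 0 and \mu_0 = \kappa / \tanh(\kappa). There exist \delta_1 > 0 and C_1 > 0 such that for all (\ell, \xi) \in [-\delta_1, \delta_1]^2, \; \big| \kappa - \sqrt{\mu_0}\,\big(F(|(\ell, \kappa \mp \xi)|) + F(|(\ell,\xi)|)\big) \big| \geq C_1 \, |(\ell,\xi)| for each choice of sign, where F(r) = \sqrt{r \tanh r} and |(a,b)| = \sqrt{a^2+b^2}. -/

import Mathlib

noncomputable def Fsw : ℝ → ℝ := fun r => Real.sqrt (r * Real.tanh r)

/-!
Put `r = |(ℓ, ξ)| ≤ κ / 2`; the other argument of `F` is at least `κ - r` by the triangle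
inequality. Strict concavity of `tanh` on `[0, ∞)` makes `tanh x / x` strictly decreasing, so
`√μ0 F(x) ≥ √((tanh b / b) / (tanh κ / κ)) x` whenever `0 ≤ x ≤ b`. With `b = κ` this gives
`√μ0 F(κ - r) ≥ κ - r`, and with `b = κ / 2` it gives `√μ0 F(r) ≥ c r` for a constant `c > 1`;
hence `κ - √μ0 (F(κ - r) + F(r)) ≤ -(c - 1) r`.
-/

open Real Set

namespace Real

theorem hasDerivAt_tanh (x : ℝ) : HasDerivAt tanh (cosh x ^ 2)⁻¹ x := by
  have h := (hasDerivAt_sinh x).div (hasDerivAt_cosh x) (cosh_pos x).ne'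
  rw [show tanh = sinh / cosh from funext tanh_eq_sinh_div_cosh]
  refine h.congr_deriv ?_
  field_simp
  linear_combination cosh_sq_sub_sinh_sq x

theorem deriv_tanh : deriv tanh = fun x => (cosh x ^ 2)⁻¹ :=
  funext fun x => (hasDerivAt_tanh x).deriv

theorem strictMono_tanh : StrictMono tanh :=
  strictMono_of_deriv_pos fun x => by rw [deriv_tanh]; exact inv_pos.2 (pow_pos (cosh_pos x) 2)

theorem tanh_nonneg {x : ℝ} (hx : 0 ≤ x) : 0 ≤ tanh x :=
  tanh_zero ▸ strictMono_tanh.monotone hx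

theorem strictConcaveOn_tanh : StrictConcaveOn ℝ (Ici 0) tanh := by
  refine StrictAntiOn.strictConcaveOn_of_deriv (convex_Ici 0)
    (fun x _ => (hasDerivAt_tanh x).continuousAt.continuousWithinAt) ?_
  rw [interior_Ici, deriv_tanh]
  intro x hx y hy hxy
  have hcosh : cosh x < cosh y := cosh_lt_cosh.2 (by rwa [abs_of_pos hx, abs_of_pos hy])
  simp only
  gcongr

theorem strictAntiOn_tanh_div_self : StrictAntiOn (fun x => tanh x / x) (Ioi 0) := by
  intro x hx y hy hxy
  simpa using strictConcaveOn_tanh.secant_strict_mono self_mem_Ici (mem_Ici.2 hx.le)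
    (mem_Ici.2 hy.le) hx.ne' hy.ne' hxy

end Real

theorem monotoneOn_Fsw : MonotoneOn Fsw (Ici 0) := fun _ hx _ _ hxy =>
  sqrt_le_sqrt (mul_le_mul hxy (strictMono_tanh.monotone hxy) (tanh_nonneg hx) (hx.trans hxy))

theorem sqrt_tanh_div_mul_le_Fsw {b x : ℝ} (hx : 0 ≤ x) (hxb : x ≤ b) :
    √(tanh b / b) * x ≤ Fsw x := by
  rcases hx.eq_or_lt with rfl | hx
  · simp [Fsw]
  have hslope : tanh b / b ≤ tanh x / x :=
    strictAntiOn_tanh_div_self.antitoneOn hx (hx.trans_le hxb) hxb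
  calc √(tanh b / b) * x = √(tanh b / b * x ^ 2) := by
        rw [sqrt_mul' _ (sq_nonneg x), sqrt_sq hx.le]
    _ ≤ √(tanh x / x * x ^ 2) := by gcongr
    _ = Fsw x := by rw [Fsw]; congr 1; field_simp

theorem exists_pos_mul_le_abs_sub_Fsw {κ : ℝ} (hκ : 0 < κ) :
    ∃ C > 0, ∀ r s : ℝ, 0 ≤ r → r ≤ κ / 2 → κ - r ≤ s →
      C * r ≤ |κ - √(κ / tanh κ) * (Fsw s + Fsw r)| := by
  set m := √(κ / tanh κ)
  have htκ : 0 < tanh κ := tanh_zero ▸ strictMono_tanh hκ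
  have hm : m * √(tanh κ / κ) = 1 := by
    rw [← sqrt_mul (by positivity), div_mul_div_comm, mul_comm κ, div_self (by positivity),
      sqrt_one]
  have hgain : 1 < m * √(tanh (κ / 2) / (κ / 2)) := by
    have hslope : tanh κ / κ < tanh (κ / 2) / (κ / 2) :=
      strictAntiOn_tanh_div_self (half_pos hκ) hκ (half_lt_self hκ)
    calc 1 = m * √(tanh κ / κ) := hm.symm
      _ < m * √(tanh (κ / 2) / (κ / 2)) := by gcongr
  refine ⟨m * √(tanh (κ / 2) / (κ / 2)) - 1, by linarith, fun r s hr0 hr hs => ?_⟩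
  have hfar : κ - r ≤ m * Fsw s :=
    calc κ - r = m * (√(tanh κ / κ) * (κ - r)) := by rw [← mul_assoc, hm, one_mul]
      _ ≤ m * Fsw (κ - r) := by gcongr; exact sqrt_tanh_div_mul_le_Fsw (by linarith) (by linarith)
      _ ≤ m * Fsw s := by
        gcongr; exact monotoneOn_Fsw (mem_Ici.2 (by linarith)) (mem_Ici.2 (by linarith)) hs
  have hnear : m * √(tanh (κ / 2) / (κ / 2)) * r ≤ m * Fsw r := by
    rw [mul_assoc]; gcongr; exact sqrt_tanh_div_mul_le_Fsw hr0 hr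
  calc (m * √(tanh (κ / 2) / (κ / 2)) - 1) * r ≤ -(κ - m * (Fsw s + Fsw r)) := by linarith
    _ ≤ |κ - m * (Fsw s + Fsw r)| := neg_le_abs _

theorem eigenvalue_separation (κ : ℝ) (hκ : 0 < κ) (μ0 : ℝ)
    (hμ0 : μ0 = κ / Real.tanh κ) :
    ∃ δ1 > (0:ℝ), ∃ C1 > (0:ℝ), ∀ ℓ ξ : ℝ, |ℓ| ≤ δ1 → |ξ| ≤ δ1 →
      C1 * Real.sqrt (ℓ^2 + ξ^2) ≤
        |κ - Real.sqrt μ0 * (Fsw (Real.sqrt (ℓ^2 + (κ - ξ)^2)) + Fsw (Real.sqrt (ℓ^2 + ξ^2)))| ∧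
      C1 * Real.sqrt (ℓ^2 + ξ^2) ≤
        |κ - Real.sqrt μ0 * (Fsw (Real.sqrt (ℓ^2 + (κ + ξ)^2)) + Fsw (Real.sqrt (ℓ^2 + ξ^2)))| := by
  obtain ⟨C, hC, hsep⟩ := exists_pos_mul_le_abs_sub_Fsw hκ
  refine ⟨κ / 4, by positivity, C, hC, fun ℓ ξ hℓ hξ => ?_⟩
  subst hμ0
  have hr : √(ℓ ^ 2 + ξ ^ 2) ≤ κ / 2 := (sqrt_le_left (by positivity)).2 <| by
    nlinarith [sq_abs ℓ, sq_abs ξ, abs_nonneg ℓ, abs_nonneg ξ]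
  have hξr : |ξ| ≤ √(ℓ ^ 2 + ξ ^ 2) := abs_le_sqrt (by linarith [sq_nonneg ℓ])
  have hfar : ∀ t, κ - |ξ| ≤ t → κ - √(ℓ ^ 2 + ξ ^ 2) ≤ √(ℓ ^ 2 + t ^ 2) := fun t ht =>
    calc κ - √(ℓ ^ 2 + ξ ^ 2) ≤ |t| := by linarith [le_abs_self t]
      _ ≤ √(ℓ ^ 2 + t ^ 2) := abs_le_sqrt (by linarith [sq_nonneg ℓ])
  exact ⟨hsep _ _ (sqrt_nonneg _) hr (hfar _ (by linarith [le_abs_self ξ])),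
    hsep _ _ (sqrt_nonneg _) hr (hfar _ (by linarith [neg_abs_le ξ]))⟩
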